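/- arXiv:1107.4914 — 5 statements merged into one kernel-verified Lean document; each statement's English description precedes it below -/
import Mathlib

section
/- For n ≥ 1 and t > 0, the function I_n(t) = ∫₀ᵗ dt₁ ∫_{t₁}ᵗ dt₂ ⋯ ∫_{t_{n−1}}ᵗ dt_n ∏_{k=1}^{n+1} cosh(c(t_k − t_{k−1})) (with t₀ = 0, t_{n+1} = t) satisfies the difference-differential equation I_n''(t) = I_{n−1}'(t) + c² I_n(t), where I₀(t) = cosh(ct). -/
open Real MeasureTheory

/-- Iterated simplex integral `∫_a^t ds₁ ∫_{s₁}^t ds₂ ⋯ ∫_{s_{n-1}}^t ds_n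
∏_{k=1}^{n+1} f(s_k - s_{k-1})` with `s₀ = a`, `s_{n+1} = t`. -/
noncomputable def iterInt (f : ℝ → ℝ) : ℕ → ℝ → ℝ → ℝ
  | 0, a, t => f (t - a)
  | n+1, a, t => ∫ s in a..t, f (s - a) * iterInt f n s t

/-- `I_n(t) = ∫₀ᵗ dt₁ ⋯ ∫_{t_{n-1}}ᵗ dt_n ∏_{k=1}^{n+1} cosh (c (t_k - t_{k-1}))`,
with `t₀ = 0`, `t_{n+1} = t`; in particular `I_0(t) = cosh (c t)`. -/
noncomputable def I (c : ℝ) (n : ℕ) (t : ℝ) : ℝ :=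
  iterInt (fun u => Real.cosh (c * u)) n 0 t

/-!
Peeling off the outermost variable, `I_{n+1} = K ⋆ I_n` with `K = cosh (c ·)` and
`(K ⋆ g)(x) = ∫₀ˣ K (x - v) g v dv`. The addition formulas write `K ⋆ g` and `S ⋆ g`
(`S = sinh (c ·)`) through ordinary primitives, which gives `(K ⋆ g)' = g + c (S ⋆ g)` and
`(S ⋆ g)' = c (K ⋆ g)`; hence `(K ⋆ g)'' = g' + c² (K ⋆ g)`, and `g = I_n` is differentiable.
-/

lemma iterInt_eq_sub (f : ℝ → ℝ) (n : ℕ) (a t : ℝ) :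
    iterInt f n a t = iterInt f n 0 (t - a) := by
  induction n generalizing a t with
  | zero => simp [iterInt]
  | succ n ih =>
    have shift := intervalIntegral.integral_comp_sub_right
      (fun s => f s * iterInt f n s (t - a)) a (a := a) (b := t)
    rw [sub_self] at shift
    simp only [iterInt, sub_zero, ← shift]
    refine intervalIntegral.integral_congr fun s _ => ?_
    simp only [ih s t, ih (s - a) (t - a), sub_sub_sub_cancel_right]

lemma iterInt_succ_eq_integral_sub (f : ℝ → ℝ) (n : ℕ) (x : ℝ) :
    iterInt f (n + 1) 0 x = ∫ v in (0 : ℝ)..x, f (x - v) * iterInt f n 0 v := by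
  have reflect := intervalIntegral.integral_comp_sub_left
    (fun v => f (x - v) * iterInt f n 0 v) x (a := 0) (b := x)
  rw [sub_zero, sub_self] at reflect
  rw [iterInt, ← reflect]
  refine intervalIntegral.integral_congr fun s _ => ?_
  simp only [iterInt_eq_sub f n s x, sub_sub_cancel, sub_zero]

section Convolution

variable {c a : ℝ} {g : ℝ → ℝ}

lemma integral_cosh_mul_sub_mul (hg : Continuous g) (x : ℝ) :
    ∫ v in a..x, cosh (c * (x - v)) * g v
      = cosh (c * x) * (∫ v in a..x, cosh (c * v) * g v)
        - sinh (c * x) * ∫ v in a..x, sinh (c * v) * g v := by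
  rw [← intervalIntegral.integral_const_mul, ← intervalIntegral.integral_const_mul,
    ← intervalIntegral.integral_sub (Continuous.intervalIntegrable (by fun_prop) _ _)
      (Continuous.intervalIntegrable (by fun_prop) _ _)]
  refine intervalIntegral.integral_congr fun v _ => ?_
  simp only [mul_sub, cosh_sub]
  ring

lemma integral_sinh_mul_sub_mul (hg : Continuous g) (x : ℝ) :
    ∫ v in a..x, sinh (c * (x - v)) * g v
      = sinh (c * x) * (∫ v in a..x, cosh (c * v) * g v)
        - cosh (c * x) * ∫ v in a..x, sinh (c * v) * g v := by
  rw [← intervalIntegral.integral_const_mul, ← intervalIntegral.integral_const_mul,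
    ← intervalIntegral.integral_sub (Continuous.intervalIntegrable (by fun_prop) _ _)
      (Continuous.intervalIntegrable (by fun_prop) _ _)]
  refine intervalIntegral.integral_congr fun v _ => ?_
  simp only [mul_sub, sinh_sub]
  ring

lemma hasDerivAt_integral_cosh_mul_sub_mul (hg : Continuous g) (x : ℝ) :
    HasDerivAt (fun y => ∫ v in a..y, cosh (c * (y - v)) * g v)
      (g x + c * ∫ v in a..x, sinh (c * (x - v)) * g v) x := by
  have hA := ((by fun_prop : Continuous fun v => cosh (c * v) * g v).integral_hasStrictDerivAt
    a x).hasDerivAt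
  have hB := ((by fun_prop : Continuous fun v => sinh (c * v) * g v).integral_hasStrictDerivAt
    a x).hasDerivAt
  have hcx : HasDerivAt (fun y => c * y) c x := hasDerivAt_const_mul c
  rw [funext (integral_cosh_mul_sub_mul hg), integral_sinh_mul_sub_mul hg]
  refine ((hcx.cosh.mul hA).sub (hcx.sinh.mul hB)).congr_deriv ?_
  linear_combination g x * cosh_sq_sub_sinh_sq (c * x)

lemma hasDerivAt_integral_sinh_mul_sub_mul (hg : Continuous g) (x : ℝ) :
    HasDerivAt (fun y => ∫ v in a..y, sinh (c * (y - v)) * g v)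
      (c * ∫ v in a..x, cosh (c * (x - v)) * g v) x := by
  have hA := ((by fun_prop : Continuous fun v => cosh (c * v) * g v).integral_hasStrictDerivAt
    a x).hasDerivAt
  have hB := ((by fun_prop : Continuous fun v => sinh (c * v) * g v).integral_hasStrictDerivAt
    a x).hasDerivAt
  have hcx : HasDerivAt (fun y => c * y) c x := hasDerivAt_const_mul c
  rw [funext (integral_sinh_mul_sub_mul hg), integral_cosh_mul_sub_mul hg]
  refine ((hcx.sinh.mul hA).sub (hcx.cosh.mul hB)).congr_deriv ?_
  ring

lemma deriv_deriv_integral_cosh_mul_sub_mul (hg : Differentiable ℝ g) (x : ℝ) :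
    deriv (deriv fun y => ∫ v in a..y, cosh (c * (y - v)) * g v) x
      = deriv g x + c ^ 2 * ∫ v in a..x, cosh (c * (x - v)) * g v := by
  rw [funext fun y =>
    (hasDerivAt_integral_cosh_mul_sub_mul (c := c) (a := a) hg.continuous y).deriv]
  exact ((hg x).hasDerivAt.add
    ((hasDerivAt_integral_sinh_mul_sub_mul hg.continuous x).const_mul c)).deriv.trans (by ring)

end Convolution

lemma I_succ (c : ℝ) (n : ℕ) :
    I c (n + 1) = fun x => ∫ v in (0 : ℝ)..x, cosh (c * (x - v)) * I c n v :=
  funext fun x => iterInt_succ_eq_integral_sub _ n x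

lemma differentiable_I (c : ℝ) (n : ℕ) : Differentiable ℝ (I c n) := by
  induction n with
  | zero =>
    have hI0 : I c 0 = fun t => cosh (c * t) := funext fun t => by simp [I, iterInt]
    rw [hI0]
    fun_prop
  | succ n ih =>
    rw [I_succ]
    exact fun x => (hasDerivAt_integral_cosh_mul_sub_mul ih.continuous x).differentiableAt

theorem iterCosh_ode_general (c : ℝ) (n : ℕ) (hn : 1 ≤ n) (t : ℝ) :
    deriv (deriv (I c n)) t = deriv (I c (n - 1)) t + c^2 * I c n t := by
  obtain ⟨m, rfl⟩ := Nat.exists_eq_add_of_le' hn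
  rw [Nat.add_sub_cancel, I_succ]
  exact deriv_deriv_integral_cosh_mul_sub_mul (differentiable_I c m) t

/-- for n ≥ 1 and t > 0, `I_n'' = I_{n-1}' + c² I_n`. -/
theorem iterCosh_ode (c : ℝ) (hc : 0 < c) (n : ℕ) (hn : 1 ≤ n) (t : ℝ) (ht : 0 < t) :
    deriv (deriv (I c n)) t = deriv (I c (n - 1)) t + c^2 * I c n t :=
  iterCosh_ode_general c n hn t
end

section
/- For E_2(t) = (2/t²)∫₀ᵗ dt₁ ∫_{t₁}ᵗ dt₂ cosh(ct₁) cosh(c(t₂−t₁)) cosh(c(t−t₂)) one has E_2(t) = (1/4) cosh(ct) + (3/(4ct)) sinh(ct) for t > 0. -/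
/-!
The double integral is the triple convolution `cosh(c·) ∗ cosh(c·) ∗ cosh(c·)` on `[0, t]`.
By product-to-sum, `(cosh(c·) ∗ cosh(c·))(L) = L/2 · cosh(cL) + sinh(cL)/(2c)` and
`(cosh(c·) ∗ sinh(c·))(L) = L/2 · sinh(cL)`. The outer integral then leaves
`∫₀ᵗ (t - x) φ(x) dx` with `φ(x) = cosh(cx) cosh(c(t - x))`, which is `t/2 · ∫₀ᵗ φ`
because `φ` is symmetric under `x ↦ t - x`.
-/

open Real

theorem Real.cosh_mul_cosh (a b : ℝ) : cosh a * cosh b = (cosh (a + b) + cosh (a - b)) / 2 := by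
  rw [cosh_add, cosh_sub]; ring

theorem Real.cosh_mul_sinh (a b : ℝ) : cosh a * sinh b = (sinh (a + b) - sinh (a - b)) / 2 := by
  rw [sinh_add, sinh_sub]; ring

namespace intervalIntegral

theorem integral_comp_sub_mul_comp_sub (f g : ℝ → ℝ) (s t : ℝ) :
    ∫ u in s..t, f (u - s) * g (t - u) = ∫ x in (0 : ℝ)..t - s, f x * g (t - s - x) := by
  simpa using integral_comp_sub_right (a := s) (b := t) (fun x => f x * g (t - s - x)) s

theorem integral_sub_mul_eq_half_mul_of_symm {f : ℝ → ℝ} {L : ℝ}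
    (hf : Continuous f) (hsymm : ∀ x, f (L - x) = f x) :
    ∫ x in (0 : ℝ)..L, (L - x) * f x = L / 2 * ∫ x in (0 : ℝ)..L, f x := by
  have hreflect : ∫ x in (0 : ℝ)..L, (L - x) * f x = ∫ x in (0 : ℝ)..L, x * f x := by
    simpa [hsymm] using integral_comp_sub_left (a := 0) (b := L) (fun x => x * f x) L
  have hsum : (∫ x in (0 : ℝ)..L, (L - x) * f x) + ∫ x in (0 : ℝ)..L, x * f x
      = L * ∫ x in (0 : ℝ)..L, f x := by
    rw [← integral_add (by apply Continuous.intervalIntegrable; fun_prop)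
      (by apply Continuous.intervalIntegrable; fun_prop), ← integral_const_mul]
    congr 1 with x
    ring
  linarith

end intervalIntegral

section HyperbolicConvolution

variable {c : ℝ} (L : ℝ)

theorem integral_cosh_mul_cosh_sub (hc : c ≠ 0) :
    ∫ x in (0 : ℝ)..L, cosh (c * x) * cosh (c * (L - x))
      = L / 2 * cosh (c * L) + sinh (c * L) / (2 * c) := by
  have hderiv : ∀ x, HasDerivAt (fun x => x / 2 * cosh (c * L) + sinh (c * (2 * x - L)) / (4 * c))
      (cosh (c * x) * cosh (c * (L - x))) x := by
    intro x
    have h := (((hasDerivAt_id' x).div_const 2).mul_const (cosh (c * L))).add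
      (((((hasDerivAt_id' x).const_mul 2).sub_const L).const_mul c).sinh.div_const (4 * c))
    refine h.congr_deriv ?_
    rw [cosh_mul_cosh]
    field_simp
    ring_nf
  rw [intervalIntegral.integral_eq_sub_of_hasDerivAt (fun x _ => hderiv x)
    (by apply Continuous.intervalIntegrable; fun_prop),
    show c * (2 * 0 - L) = -(c * L) by ring, sinh_neg]
  field_simp
  ring_nf

theorem integral_cosh_mul_sinh_sub (hc : c ≠ 0) :
    ∫ x in (0 : ℝ)..L, cosh (c * x) * sinh (c * (L - x)) = L / 2 * sinh (c * L) := by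
  have hderiv : ∀ x, HasDerivAt (fun x => x / 2 * sinh (c * L) - cosh (c * (2 * x - L)) / (4 * c))
      (cosh (c * x) * sinh (c * (L - x))) x := by
    intro x
    have h := (((hasDerivAt_id' x).div_const 2).mul_const (sinh (c * L))).sub
      (((((hasDerivAt_id' x).const_mul 2).sub_const L).const_mul c).cosh.div_const (4 * c))
    refine h.congr_deriv ?_
    rw [cosh_mul_sinh]
    field_simp
    ring_nf
  rw [intervalIntegral.integral_eq_sub_of_hasDerivAt (fun x _ => hderiv x)
    (by apply Continuous.intervalIntegrable; fun_prop),
    show c * (2 * 0 - L) = -(c * L) by ring, cosh_neg]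
  ring_nf

end HyperbolicConvolution

/-- `E₂(t) = (2/t²)∫₀ᵗ dt₁ ∫_{t₁}ᵗ dt₂ cosh(ct₁)cosh(c(t₂-t₁))cosh(c(t-t₂))
                         = (1/4)cosh(ct) + (3/(4ct)) sinh(ct)`. -/
theorem conditional_mean_two_changes (c t : ℝ) (hc : 0 < c) (ht : 0 < t) :
    (2 / t ^ 2) * ∫ t₁ in (0:ℝ)..t, ∫ t₂ in t₁..t,
        Real.cosh (c * t₁) * Real.cosh (c * (t₂ - t₁)) * Real.cosh (c * (t - t₂))
      = (1 / 4) * Real.cosh (c * t) + (3 / (4 * c * t)) * Real.sinh (c * t) := by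
  have hc0 : c ≠ 0 := hc.ne'
  have hinner : ∀ t₁, ∫ t₂ in t₁..t, cosh (c * t₁) * cosh (c * (t₂ - t₁)) * cosh (c * (t - t₂))
      = 1 / 2 * ((t - t₁) * (cosh (c * t₁) * cosh (c * (t - t₁))))
        + 1 / (2 * c) * (cosh (c * t₁) * sinh (c * (t - t₁))) := by
    intro t₁
    simp_rw [mul_assoc, intervalIntegral.integral_const_mul]
    rw [intervalIntegral.integral_comp_sub_mul_comp_sub (fun x => cosh (c * x))
      (fun x => cosh (c * x)), integral_cosh_mul_cosh_sub _ hc0]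
    field_simp
  have hsymm : ∀ x, cosh (c * (t - x)) * cosh (c * (t - (t - x)))
      = cosh (c * x) * cosh (c * (t - x)) := by
    intro x
    rw [sub_sub_cancel, mul_comm]
  simp_rw [hinner]
  rw [intervalIntegral.integral_add (by apply Continuous.intervalIntegrable; fun_prop)
      (by apply Continuous.intervalIntegrable; fun_prop),
    intervalIntegral.integral_const_mul, intervalIntegral.integral_const_mul,
    intervalIntegral.integral_sub_mul_eq_half_mul_of_symm (by fun_prop) hsymm,
    integral_cosh_mul_cosh_sub _ hc0, integral_cosh_mul_sinh_sub _ hc0]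
  field_simp
  ring
end

section
/- For n ≥ 1, the function J_n(t) = ∫₀ᵗ dt₁ ∫_{t₁}ᵗ dt₂ ⋯ ∫_{t_{n−1}}ᵗ dt_n ∏_{k=1}^{n+1} sinh(c(t_k − t_{k−1})) (t₀=0, t_{n+1}=t) satisfies J_n''(t) = c J_{n−1}(t) + c² J_n(t), with J₀(t) = sinh(ct). -/
open Real MeasureTheory

/-- `J_n(t)`: simplex integral of products of hyperbolic sines of increments,
`J_0(t) = sinh (c t)`. -/
noncomputable def J (c : ℝ) (n : ℕ) (t : ℝ) : ℝ :=
  iterInt (fun u => Real.sinh (c * u)) n 0 t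

/-!
The inner integrals of `iterInt` depend only on `t - s`, so `J_{n+1}` is the convolution
`∫₀ᵗ sinh (c (t - s)) J_n(s) ds`. For continuous `g`, the addition formulas write
`S(t) = ∫₀ᵗ sinh (c (t - s)) g(s) ds` and `C(t) = ∫₀ᵗ cosh (c (t - s)) g(s) ds` through
`sinh (c t)`, `cosh (c t)` and primitives, and the fundamental theorem of calculus gives
`S' = c C` and `C' = g + c S`, hence `S'' = c g + c² S`.
-/

namespace iterInt

variable (f : ℝ → ℝ)

theorem eq_sub (n : ℕ) (a t : ℝ) : iterInt f n a t = iterInt f n 0 (t - a) := by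
  induction n generalizing a t with
  | zero => simp [iterInt]
  | succ n ih =>
    have hshift := intervalIntegral.integral_comp_sub_right
      (fun u => f u * iterInt f n u (t - a)) (a := a) (b := t) a
    simp only [sub_self] at hshift
    simp only [iterInt, sub_zero, ← hshift]
    refine intervalIntegral.integral_congr fun s _ => ?_
    rw [ih s t, ih (s - a) (t - a), sub_sub_sub_cancel_right]

theorem succ_eq_integral (n : ℕ) (t : ℝ) :
    iterInt f (n + 1) 0 t = ∫ s in (0 : ℝ)..t, f (t - s) * iterInt f n 0 s := by
  have hreflect := intervalIntegral.integral_comp_sub_left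
    (fun s => f (t - s) * iterInt f n 0 s) (a := 0) (b := t) t
  simp only [sub_sub_cancel, sub_self, sub_zero] at hreflect
  rw [iterInt, ← hreflect]
  refine intervalIntegral.integral_congr fun s _ => ?_
  simp only [sub_zero, eq_sub f n s t]

end iterInt

section SinhConvolution

variable {g : ℝ → ℝ} (hg : Continuous g) (c : ℝ)

include hg in
theorem integral_sinh_mul_sub_eq (t : ℝ) :
    ∫ s in (0 : ℝ)..t, sinh (c * (t - s)) * g s =
      sinh (c * t) * (∫ s in (0 : ℝ)..t, cosh (c * s) * g s) -
        cosh (c * t) * ∫ s in (0 : ℝ)..t, sinh (c * s) * g s := by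
  rw [← intervalIntegral.integral_const_mul, ← intervalIntegral.integral_const_mul,
    ← intervalIntegral.integral_sub ((by fun_prop : Continuous _).intervalIntegrable _ _)
      ((by fun_prop : Continuous _).intervalIntegrable _ _)]
  refine intervalIntegral.integral_congr fun s _ => ?_
  simp only [mul_sub, sinh_sub]
  ring

include hg in
theorem integral_cosh_mul_sub_eq (t : ℝ) :
    ∫ s in (0 : ℝ)..t, cosh (c * (t - s)) * g s =
      cosh (c * t) * (∫ s in (0 : ℝ)..t, cosh (c * s) * g s) -
        sinh (c * t) * ∫ s in (0 : ℝ)..t, sinh (c * s) * g s := by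
  rw [← intervalIntegral.integral_const_mul, ← intervalIntegral.integral_const_mul,
    ← intervalIntegral.integral_sub ((by fun_prop : Continuous _).intervalIntegrable _ _)
      ((by fun_prop : Continuous _).intervalIntegrable _ _)]
  refine intervalIntegral.integral_congr fun s _ => ?_
  simp only [mul_sub, cosh_sub]
  ring

include hg in
theorem hasDerivAt_integral_comp_mul_mul {φ : ℝ → ℝ} (hφ : Continuous φ) (t : ℝ) :
    HasDerivAt (fun t => ∫ s in (0 : ℝ)..t, φ (c * s) * g s) (φ (c * t) * g t) t :=
  ((by fun_prop : Continuous fun s => φ (c * s) * g s).integral_hasStrictDerivAt 0 t).hasDerivAt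

include hg in
theorem hasDerivAt_integral_sinh_mul_sub (t : ℝ) :
    HasDerivAt (fun t => ∫ s in (0 : ℝ)..t, sinh (c * (t - s)) * g s)
      (c * ∫ s in (0 : ℝ)..t, cosh (c * (t - s)) * g s) t := by
  have hcosh := hasDerivAt_integral_comp_mul_mul hg c continuous_cosh t
  have hsinh := hasDerivAt_integral_comp_mul_mul hg c continuous_sinh t
  have hc := (hasDerivAt_id' t).const_mul c
  simp only [integral_sinh_mul_sub_eq hg c, integral_cosh_mul_sub_eq hg c]
  refine ((hc.sinh.mul hcosh).sub (hc.cosh.mul hsinh)).congr_deriv ?_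
  ring

include hg in
theorem hasDerivAt_integral_cosh_mul_sub (t : ℝ) :
    HasDerivAt (fun t => ∫ s in (0 : ℝ)..t, cosh (c * (t - s)) * g s)
      (g t + c * ∫ s in (0 : ℝ)..t, sinh (c * (t - s)) * g s) t := by
  have hcosh := hasDerivAt_integral_comp_mul_mul hg c continuous_cosh t
  have hsinh := hasDerivAt_integral_comp_mul_mul hg c continuous_sinh t
  have hc := (hasDerivAt_id' t).const_mul c
  simp only [integral_sinh_mul_sub_eq hg c, integral_cosh_mul_sub_eq hg c]
  refine ((hc.cosh.mul hcosh).sub (hc.sinh.mul hsinh)).congr_deriv ?_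
  linear_combination g t * cosh_sq_sub_sinh_sq (c * t)

include hg in
theorem deriv_deriv_integral_sinh_mul_sub (t : ℝ) :
    deriv (deriv fun t => ∫ s in (0 : ℝ)..t, sinh (c * (t - s)) * g s) t =
      c * g t + c ^ 2 * ∫ s in (0 : ℝ)..t, sinh (c * (t - s)) * g s := by
  have hderiv : (deriv fun t => ∫ s in (0 : ℝ)..t, sinh (c * (t - s)) * g s) =
      fun t => c * ∫ s in (0 : ℝ)..t, cosh (c * (t - s)) * g s :=
    funext fun t => (hasDerivAt_integral_sinh_mul_sub hg c t).deriv
  rw [hderiv, ((hasDerivAt_integral_cosh_mul_sub hg c t).const_mul c).deriv]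
  ring

end SinhConvolution

theorem J_succ_eq_integral (c : ℝ) (n : ℕ) :
    J c (n + 1) = fun t => ∫ s in (0 : ℝ)..t, sinh (c * (t - s)) * J c n s :=
  funext (iterInt.succ_eq_integral _ n)

theorem continuous_J (c : ℝ) (n : ℕ) : Continuous (J c n) := by
  induction n with
  | zero => exact (by fun_prop : Continuous fun t => sinh (c * (t - 0)))
  | succ n ih =>
    rw [J_succ_eq_integral]
    exact continuous_iff_continuousAt.2 fun t =>
      (hasDerivAt_integral_sinh_mul_sub ih c t).continuousAt

theorem iterSinh_ode_general (c : ℝ) (n : ℕ) (hn : 1 ≤ n) (t : ℝ) :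
    deriv (deriv (J c n)) t = c * J c (n - 1) t + c^2 * J c n t := by
  obtain ⟨m, rfl⟩ := Nat.exists_eq_add_of_le' hn
  rw [Nat.add_sub_cancel, J_succ_eq_integral]
  exact deriv_deriv_integral_sinh_mul_sub (continuous_J c m) c t

/-- for n ≥ 1, `J_n'' = c J_{n-1} + c² J_n`. -/
theorem iterSinh_ode (c : ℝ) (hc : 0 < c) (n : ℕ) (hn : 1 ≤ n) (t : ℝ) (ht : 0 < t) :
    deriv (deriv (J c n)) t = c * J c (n - 1) t + c^2 * J c n t :=
  iterSinh_ode_general c n hn t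
end

section
/- Let M(t) = e^{−λt} ∑_{n=0}^∞ λⁿ U_n(t), where U_n(t) = ∫₀ᵗ dt₁ ⋯ ∫_{t_{n−1}}ᵗ dt_n ∏_{k=1}^{n+1} cosh²(c(t_k−t_{k−1})) (t₀=0, t_{n+1}=t, U₀(t)=cosh²(ct)). Then M satisfies M''' = −2λM'' + (4c²−λ²)M' + 2c²λM, with M(0)=1, M'(0)=0, M''(0)=2c². -/
/-!
`∑ λⁿ U_n` is the Neumann series of the Volterra equation `G = k + λ k ⋆ G` with kernel
`k(x) = cosh²(cx) = 1/2 + (e^{2cx} + e^{-2cx})/4`. Since `k` is a combination of exponentials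
with rates `0, ±2c`, the convolution `k ⋆ G` splits into three pieces `P_a = e^{a·} ⋆ G`, each
satisfying `P_a' = G + a P_a`. Eliminating them gives `G''' = λG'' + 4c²G' - 2λc²G`, and the
substitution `M = e^{-λt} G` turns this into the equation for `M`.
-/

open Real MeasureTheory

/-- `U_n(t)`: simplex integral of products of squared hyperbolic cosines of
increments, `U_0(t) = cosh²(ct)`. -/
noncomputable def U (c : ℝ) (n : ℕ) (t : ℝ) : ℝ :=
  iterInt (fun u => Real.cosh (c * u) ^ 2) n 0 t

open intervalIntegral Set
open scoped Nat

theorem iterInt_eq_iterInt_zero_sub (f : ℝ → ℝ) :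
    ∀ (n : ℕ) (a t : ℝ), iterInt f n a t = iterInt f n 0 (t - a)
  | 0, a, t => by simp [iterInt]
  | n + 1, a, t => by
    calc iterInt f (n + 1) a t = ∫ s in a..t, f (s - a) * iterInt f n 0 (t - a - (s - a)) := by
          simp only [iterInt, iterInt_eq_iterInt_zero_sub f n _ t, sub_sub_sub_cancel_right]
      _ = ∫ s in (0 : ℝ)..t - a, f s * iterInt f n 0 (t - a - s) := by
          simpa using integral_comp_sub_right (a := a) (b := t)
            (fun s => f s * iterInt f n 0 (t - a - s)) a
      _ = iterInt f (n + 1) 0 (t - a) := by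
          simp only [iterInt, iterInt_eq_iterInt_zero_sub f n _ (t - a), sub_zero]

theorem iterInt_succ_zero (f : ℝ → ℝ) (n : ℕ) (x : ℝ) :
    iterInt f (n + 1) 0 x = ∫ u in (0 : ℝ)..x, f (x - u) * iterInt f n 0 u := by
  calc iterInt f (n + 1) 0 x = ∫ s in (0 : ℝ)..x, f (x - (x - s)) * iterInt f n 0 (x - s) := by
        simp only [iterInt, iterInt_eq_iterInt_zero_sub f n _ x, sub_zero, sub_sub_cancel]
    _ = _ := by
        simpa using
          integral_comp_sub_left (a := 0) (b := x) (fun u => f (x - u) * iterInt f n 0 u) x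

theorem continuous_iterInt_zero {f : ℝ → ℝ} (hf : Continuous f) :
    ∀ n, Continuous (iterInt f n 0)
  | 0 => by simpa [iterInt] using hf
  | n + 1 => by
    rw [funext (iterInt_succ_zero f n)]
    exact continuous_parametric_intervalIntegral_of_continuous
      ((hf.comp (continuous_fst.sub continuous_snd)).mul
        ((continuous_iterInt_zero hf n).comp continuous_snd)) continuous_id

theorem abs_integral_abs_pow (n : ℕ) (x : ℝ) :
    |∫ u in (0 : ℝ)..x, |u| ^ n| = |x| ^ (n + 1) / (n + 1) := by
  rcases le_total 0 x with hx | hx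
  · rw [integral_congr (g := fun u => u ^ n) fun u hu => by
      rw [uIcc_of_le hx] at hu; rw [abs_of_nonneg hu.1], integral_pow]
    simp [abs_div, abs_of_nonneg hx, abs_of_nonneg (by positivity : (0 : ℝ) ≤ n + 1)]
  · rw [integral_congr (g := fun u => (-1) ^ n * u ^ n) fun u hu => by
      rw [uIcc_of_ge hx] at hu; rw [abs_of_nonpos hu.2, neg_pow],
      intervalIntegral.integral_const_mul, integral_pow]
    simp [abs_mul, abs_div, abs_pow, abs_of_nonneg (by positivity : (0 : ℝ) ≤ n + 1)]

theorem abs_le_and_abs_sub_le_of_mem_uIcc {x u : ℝ} (hu : u ∈ uIcc 0 x) :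
    |u| ≤ |x| ∧ |x - u| ≤ |x| := by
  simpa using And.intro (abs_sub_left_of_mem_uIcc hu) (abs_sub_right_of_mem_uIcc hu)

theorem abs_iterInt_zero_le {f : ℝ → ℝ} {T K : ℝ} (hf : ∀ y, |y| ≤ T → |f y| ≤ K) :
    ∀ (n : ℕ) (x : ℝ), |x| ≤ T → |iterInt f n 0 x| ≤ K ^ (n + 1) * |x| ^ n / n !
  | 0, x, hx => by simpa [iterInt] using hf x hx
  | n + 1, x, hx => by
    have hK : 0 ≤ K := (abs_nonneg _).trans (hf x hx)
    have hbound :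
        ∀ u ∈ uIoc 0 x, ‖f (x - u) * iterInt f n 0 u‖ ≤ K ^ (n + 2) / n ! * |u| ^ n := by
      intro u hu
      obtain ⟨hu, hxu⟩ := abs_le_and_abs_sub_le_of_mem_uIcc (uIoc_subset_uIcc hu)
      calc ‖f (x - u) * iterInt f n 0 u‖ = |f (x - u)| * |iterInt f n 0 u| := abs_mul _ _
        _ ≤ K * (K ^ (n + 1) * |u| ^ n / n !) :=
          mul_le_mul (hf _ (hxu.trans hx)) (abs_iterInt_zero_le hf n u (hu.trans hx))
            (abs_nonneg _) hK
        _ = K ^ (n + 2) / n ! * |u| ^ n := by ring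
    calc |iterInt f (n + 1) 0 x| ≤ |∫ u in (0 : ℝ)..x, K ^ (n + 2) / n ! * |u| ^ n| := by
          rw [iterInt_succ_zero]
          refine norm_integral_le_abs_of_norm_le
            (ae_restrict_of_forall_mem measurableSet_uIoc hbound)
            (Continuous.intervalIntegrable ?_ _ _)
          fun_prop
      _ = K ^ (n + 1 + 1) * |x| ^ (n + 1) / (n + 1) ! := by
          rw [intervalIntegral.integral_const_mul, abs_mul, abs_integral_abs_pow,
            abs_of_nonneg (by positivity), Nat.factorial_succ]
          push_cast
          field_simp

theorem exists_abs_le_of_continuous {f : ℝ → ℝ} (hf : Continuous f) (T : ℝ) :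
    ∃ K, ∀ y, |y| ≤ T → |f y| ≤ K := by
  obtain ⟨K, hK⟩ :=
    isCompact_Icc.exists_bound_of_continuousOn (hf.continuousOn (s := Icc (-T) T))
  exact ⟨K, fun y hy => hK y (abs_le.1 hy)⟩

noncomputable def neumannSeries (f : ℝ → ℝ) (lam x : ℝ) : ℝ :=
  ∑' n : ℕ, lam ^ n * iterInt f n 0 x

section NeumannSeries

variable {f : ℝ → ℝ}

theorem norm_pow_mul_iterInt_zero_le {T K : ℝ} (hf : ∀ y, |y| ≤ T → |f y| ≤ K) (lam : ℝ) (n : ℕ)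
    {x : ℝ} (hx : |x| ≤ T) :
    ‖lam ^ n * iterInt f n 0 x‖ ≤ K * (|lam| * K * T) ^ n / n ! := by
  have hK : 0 ≤ K := (abs_nonneg _).trans (hf x hx)
  calc ‖lam ^ n * iterInt f n 0 x‖ = |lam| ^ n * |iterInt f n 0 x| := by
        rw [norm_mul, norm_pow, Real.norm_eq_abs, Real.norm_eq_abs]
    _ ≤ |lam| ^ n * (K ^ (n + 1) * T ^ n / n !) := by
        gcongr
        exact (abs_iterInt_zero_le hf n x hx).trans (by gcongr)
    _ = K * (|lam| * K * T) ^ n / n ! := by ring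

theorem summable_mul_pow_div_factorial (K a : ℝ) : Summable fun n : ℕ => K * a ^ n / n ! := by
  simpa [mul_div_assoc] using (Real.summable_pow_div_factorial a).mul_left K

theorem summable_pow_mul_iterInt_zero (hf : Continuous f) (lam x : ℝ) :
    Summable fun n => lam ^ n * iterInt f n 0 x := by
  obtain ⟨K, hK⟩ := exists_abs_le_of_continuous hf |x|
  exact (summable_mul_pow_div_factorial _ _).of_norm_bounded
    fun n => norm_pow_mul_iterInt_zero_le hK lam n le_rfl

theorem continuous_neumannSeries (hf : Continuous f) (lam : ℝ) :
    Continuous (neumannSeries f lam) := by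
  refine continuous_iff_continuousAt.2 fun x₀ => ?_
  obtain ⟨K, hK⟩ := exists_abs_le_of_continuous hf (|x₀| + 1)
  have hcont : ContinuousOn (neumannSeries f lam) (Icc (-(|x₀| + 1)) (|x₀| + 1)) :=
    continuousOn_tsum (fun n => (continuous_const.mul (continuous_iterInt_zero hf n)).continuousOn)
      (summable_mul_pow_div_factorial _ _)
      fun n x hx => norm_pow_mul_iterInt_zero_le hK lam n (abs_le.2 hx)
  exact hcont.continuousAt <|
    Icc_mem_nhds (by linarith [neg_abs_le x₀]) (by linarith [le_abs_self x₀])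

theorem neumannSeries_eq (hf : Continuous f) (lam x : ℝ) :
    neumannSeries f lam x
      = f x + lam * ∫ u in (0 : ℝ)..x, f (x - u) * neumannSeries f lam u := by
  obtain ⟨K, hK⟩ := exists_abs_le_of_continuous hf |x|
  have hK0 : 0 ≤ K := (abs_nonneg _).trans (hK x le_rfl)
  have hswap : HasSum (fun n => ∫ u in (0 : ℝ)..x, f (x - u) * (lam ^ n * iterInt f n 0 u))
      (∫ u in (0 : ℝ)..x, f (x - u) * neumannSeries f lam u) := by
    refine hasSum_integral_of_dominated_convergence
      (fun n _ => K * (K * (|lam| * K * |x|) ^ n / n !)) (fun n => ?_) (fun n => ?_)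
      (ae_of_all _ fun _ _ => (summable_mul_pow_div_factorial _ _).mul_left K)
      intervalIntegrable_const
      (ae_of_all _ fun u _ => (summable_pow_mul_iterInt_zero hf lam u).hasSum.mul_left _)
    · exact ((hf.comp (continuous_const.sub continuous_id)).mul
        (continuous_const.mul (continuous_iterInt_zero hf n))).aestronglyMeasurable
    · refine ae_of_all _ fun u hu => ?_
      obtain ⟨hu, hxu⟩ := abs_le_and_abs_sub_le_of_mem_uIcc (uIoc_subset_uIcc hu)
      rw [norm_mul]
      exact mul_le_mul (hK _ hxu) (norm_pow_mul_iterInt_zero_le hK lam n hu) (norm_nonneg _)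
        hK0
  have hterm : ∀ n : ℕ, ∫ u in (0 : ℝ)..x, f (x - u) * (lam ^ n * iterInt f n 0 u)
      = lam ^ n * iterInt f (n + 1) 0 x := fun n => by
    rw [iterInt_succ_zero, ← intervalIntegral.integral_const_mul]
    congr 1 with u
    ring
  rw [funext hterm] at hswap
  rw [neumannSeries, (summable_pow_mul_iterInt_zero hf lam x).tsum_eq_zero_add, ← hswap.tsum_eq,
    ← tsum_mul_left]
  simp [iterInt, pow_succ', mul_assoc]

end NeumannSeries

noncomputable def expConv (a : ℝ) (g : ℝ → ℝ) (x : ℝ) : ℝ :=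
  ∫ u in (0 : ℝ)..x, exp (a * (x - u)) * g u

theorem expConv_eq_exp_mul (a : ℝ) (g : ℝ → ℝ) (x : ℝ) :
    expConv a g x = exp (a * x) * ∫ u in (0 : ℝ)..x, exp (-(a * u)) * g u := by
  rw [expConv, ← intervalIntegral.integral_const_mul]
  congr 1 with u
  rw [← mul_assoc, ← exp_add]
  ring_nf

theorem hasDerivAt_expConv {g : ℝ → ℝ} (hg : Continuous g) (a x : ℝ) :
    HasDerivAt (expConv a g) (g x + a * expConv a g x) x := by
  have hexp : HasDerivAt (fun x => exp (a * x)) (exp (a * x) * a) x := by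
    simpa using ((hasDerivAt_id x).const_mul a).exp
  have hprim := ((by fun_prop : Continuous fun u => exp (-(a * u)) * g u).integral_hasStrictDerivAt
    0 x).hasDerivAt
  rw [funext (expConv_eq_exp_mul a g)]
  have hinv : exp (a * x) * exp (-(a * x)) = 1 := by rw [← exp_add, add_neg_cancel, exp_zero]
  refine (hexp.mul hprim).congr_deriv ?_
  beta_reduce
  rw [← mul_assoc (exp (a * x)), hinv]
  ring

theorem expConv_zero_right (a : ℝ) (g : ℝ → ℝ) : expConv a g 0 = 0 := integral_same

-- Written with `exp (0 * y)` so that all three terms are kernels of `expConv`.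
theorem cosh_mul_sq_eq_exp (c y : ℝ) :
    cosh (c * y) ^ 2 = exp (0 * y) / 2 + (exp (2 * c * y) + exp (-2 * c * y)) / 4 := by
  have h := cosh_two_mul (c * y)
  rw [cosh_eq, cosh_sq] at h
  rw [zero_mul, exp_zero, cosh_sq, mul_assoc, neg_mul, neg_mul, mul_assoc]
  linarith

theorem integral_cosh_sq_mul_eq_expConv (c : ℝ) {g : ℝ → ℝ} (hg : Continuous g) (x : ℝ) :
    ∫ u in (0 : ℝ)..x, cosh (c * (x - u)) ^ 2 * g u
      = expConv 0 g x / 2 + (expConv (2 * c) g x + expConv (-2 * c) g x) / 4 := by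
  have hint : ∀ a : ℝ, IntervalIntegrable (fun u => exp (a * (x - u)) * g u) volume 0 x :=
    fun a => (by fun_prop : Continuous fun u => exp (a * (x - u)) * g u).intervalIntegrable _ _
  calc ∫ u in (0 : ℝ)..x, cosh (c * (x - u)) ^ 2 * g u
      = ∫ u in (0 : ℝ)..x, exp (0 * (x - u)) * g u / 2
          + (exp (2 * c * (x - u)) * g u + exp (-2 * c * (x - u)) * g u) / 4 := by
        congr 1 with u
        rw [cosh_mul_sq_eq_exp]
        ring
    _ = _ := by
        rw [integral_add ((hint 0).div_const _) (((hint _).add (hint _)).div_const _),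
          intervalIntegral.integral_div, intervalIntegral.integral_div,
          integral_add (hint _) (hint _)]
        rfl

section CoshSqRenewal

variable (lam c : ℝ) {G : ℝ → ℝ}

theorem eq_expConv_of_renewal_coshSq (hG : Continuous G)
    (hGeq : ∀ x, G x = cosh (c * x) ^ 2 + lam * ∫ u in (0 : ℝ)..x, cosh (c * (x - u)) ^ 2 * G u)
    (x : ℝ) :
    G x = cosh (c * x) ^ 2
      + lam * (expConv 0 G x / 2 + (expConv (2 * c) G x + expConv (-2 * c) G x) / 4) := by
  rw [hGeq x, integral_cosh_sq_mul_eq_expConv c hG]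

theorem exists_hasDerivAt_of_renewal_coshSq (hG : Continuous G)
    (hGeq : ∀ x, G x = cosh (c * x) ^ 2 + lam * ∫ u in (0 : ℝ)..x, cosh (c * (x - u)) ^ 2 * G u) :
    ∃ G₁ G₂ : ℝ → ℝ, (∀ x, HasDerivAt G (G₁ x) x) ∧ (∀ x, HasDerivAt G₁ (G₂ x) x) ∧
      (∀ x, HasDerivAt G₂ (lam * G₂ x + 4 * c ^ 2 * G₁ x - 2 * lam * c ^ 2 * G x) x) ∧
      G 0 = 1 ∧ G₁ 0 = lam ∧ G₂ 0 = lam ^ 2 + 2 * c ^ 2 := by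
  have hP := hasDerivAt_expConv hG
  have hG₀ := eq_expConv_of_renewal_coshSq lam c hG hGeq
  have hcosh : ∀ x, HasDerivAt (fun x => cosh (c * x) ^ 2) (c * sinh (2 * c * x)) x :=
    fun x => by
    refine (((hasDerivAt_id' x).const_mul c).cosh.fun_pow 2).congr_deriv ?_
    rw [show 2 * c * x = 2 * (c * x) by ring, sinh_two_mul]
    push_cast
    ring
  have hsinh : ∀ x, HasDerivAt (fun x => c * sinh (2 * c * x)) (2 * c ^ 2 * cosh (2 * c * x)) x :=
    fun x => by
      refine ((((hasDerivAt_id' x).const_mul (2 * c)).sinh).const_mul c).congr_deriv ?_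
      ring
  set G₁ : ℝ → ℝ := fun x =>
    c * sinh (2 * c * x) + lam * G x + lam * c / 2 * (expConv (2 * c) G x - expConv (-2 * c) G x)
  set G₂ : ℝ → ℝ := fun x =>
    lam * G₁ x + 4 * c ^ 2 * G x - 2 * c ^ 2 - 2 * lam * c ^ 2 * expConv 0 G x
  have hGG₁ : ∀ x, HasDerivAt G (G₁ x) x := fun x => by
    rw [funext hG₀]
    refine ((hcosh x).fun_add ((((hP 0 x).div_const 2).fun_add
      (((hP _ x).fun_add (hP _ x)).div_const 4)).const_mul lam)).congr_deriv ?_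
    ring
  have hG₁G₂ : ∀ x, HasDerivAt G₁ (G₂ x) x := fun x => by
    refine (((hsinh x).fun_add ((hGG₁ x).const_mul lam)).fun_add
      (((hP (2 * c) x).fun_sub (hP (-2 * c) x)).const_mul (lam * c / 2))).congr_deriv ?_
    have hcosh_two : cosh (2 * c * x) = 2 * cosh (c * x) ^ 2 - 1 := by
      rw [mul_assoc, cosh_two_mul, cosh_sq]; ring
    linear_combination 2 * c ^ 2 * hcosh_two - 4 * c ^ 2 * hG₀ x
  have hG0 : G 0 = 1 := by simpa using hGeq 0
  have hG₁0 : G₁ 0 = lam := by simp [G₁, expConv_zero_right, hG0]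
  refine ⟨G₁, G₂, hGG₁, hG₁G₂, fun x => ?_, hG0, hG₁0, ?_⟩
  · refine (((((hG₁G₂ x).const_mul lam).fun_add ((hGG₁ x).const_mul (4 * c ^ 2))).fun_sub
      (hasDerivAt_const x (2 * c ^ 2))).fun_sub
        ((hP 0 x).const_mul (2 * lam * c ^ 2))).congr_deriv ?_
    ring
  · simp only [G₂, hG₁0, hG0, expConv_zero_right]
    ring

end CoshSqRenewal

theorem deriv_exp_neg_mul_mul {G G' : ℝ → ℝ} (lam : ℝ) (hG : ∀ x, HasDerivAt G (G' x) x) :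
    deriv (fun t => exp (-lam * t) * G t) = fun t => exp (-lam * t) * (G' t - lam * G t) := by
  funext t
  refine (((hasDerivAt_id' t).const_mul (-lam)).exp.mul (hG t)).deriv.trans ?_
  ring

theorem second_moment_ode_general (lam c : ℝ)
    (M : ℝ → ℝ) (hM : ∀ t, M t = Real.exp (-lam * t) * ∑' n : ℕ, lam ^ n * U c n t) :
    (∀ t, 0 < t → deriv (deriv (deriv M)) t
        = -2 * lam * deriv (deriv M) t + (4 * c^2 - lam^2) * deriv M t
          + 2 * c^2 * lam * M t)
      ∧ M 0 = 1 ∧ deriv M 0 = 0 ∧ deriv (deriv M) 0 = 2 * c^2 := by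
  have hf : Continuous fun u => cosh (c * u) ^ 2 := by fun_prop
  obtain ⟨G₁, G₂, h₀, h₁, h₂, hG0, hG₁0, hG₂0⟩ := exists_hasDerivAt_of_renewal_coshSq lam c
    (continuous_neumannSeries hf lam) (neumannSeries_eq hf lam)
  obtain rfl : M = fun t => exp (-lam * t) * neumannSeries (fun u => cosh (c * u) ^ 2) lam t :=
    funext hM
  have d₁ := deriv_exp_neg_mul_mul lam h₀
  have d₂ := deriv_exp_neg_mul_mul lam fun x => (h₁ x).fun_sub ((h₀ x).const_mul lam)
  have d₃ := deriv_exp_neg_mul_mul lam fun x => ((h₂ x).fun_sub ((h₁ x).const_mul lam)).fun_sub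
    (((h₁ x).fun_sub ((h₀ x).const_mul lam)).const_mul lam)
  rw [d₁, d₂, d₃]
  refine ⟨fun t _ => by ring, by simp [hG0], by simp [hG0, hG₁0], ?_⟩
  simp [hG0, hG₁0, hG₂0]
  ring

/-- the second moment `M(t) = e^{-λt} ∑ λⁿ U_n(t)` satisfies
`M''' = -2λM'' + (4c² - λ²)M' + 2c²λM` with `M(0)=1`, `M'(0)=0`, `M''(0)=2c²`. -/
theorem second_moment_ode (lam c : ℝ) (hlam : 0 < lam) (hc : 0 < c)
    (M : ℝ → ℝ) (hM : ∀ t, M t = Real.exp (-lam * t) * ∑' n : ℕ, lam ^ n * U c n t) :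
    (∀ t, 0 < t → deriv (deriv (deriv M)) t
        = -2 * lam * deriv (deriv M) t + (4 * c^2 - lam^2) * deriv M t
          + 2 * c^2 * lam * M t)
      ∧ M 0 = 1 ∧ deriv M 0 = 0 ∧ deriv (deriv M) 0 = 2 * c^2 :=
  second_moment_ode_general lam c M hM
end

section
/- Let A = (λ + √(λ²+4c²))/2 and B = (λ − √(λ²+4c²))/2, and E(t) as in the mean hyperbolic distance formula. Then for k = 1: (λ e^{−λt}/(1−e^{−λt})) ∫₀ᵗ e^{λ(t−s)} E(t−s) ds = (λ/√(λ²+4c²)) · sinh((t/2)√(λ²+4c²)) / sinh(λt/2). -/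
/-!
Substituting `u = t - s`, the integrand becomes `e^{λu} E(u) = e^{λu/2} (cosh + (λ/w) sinh)(uw/2)`
with `w = √(λ² + 4c²)`, which is exactly the derivative of `(2/w) e^{λu/2} sinh(uw/2)`. Hence the
integral equals `(2/w) e^{λt/2} sinh(tw/2)`, and `1 - e^{-λt} = 2 e^{-λt/2} sinh(λt/2)` turns the
prefactor into `λ / (2 e^{λt/2} sinh(λt/2))`.
-/

open Real MeasureTheory

/-- The mean hyperbolic distance
`E(t) = e^{-λt/2}[cosh((t/2)√(λ²+4c²)) + (λ/√(λ²+4c²)) sinh((t/2)√(λ²+4c²))]`. -/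
noncomputable def meanDist (lam c t : ℝ) : ℝ :=
  Real.exp (-(lam * t) / 2) *
    (Real.cosh (t / 2 * Real.sqrt (lam^2 + 4*c^2))
      + lam / Real.sqrt (lam^2 + 4*c^2) * Real.sinh (t / 2 * Real.sqrt (lam^2 + 4*c^2)))

theorem hasDerivAt_exp_mul_sinh (lam w u : ℝ) (hw : w ≠ 0) :
    HasDerivAt (fun u => 2 / w * exp (lam * u / 2) * sinh (u / 2 * w))
      (exp (lam * u / 2) * (cosh (u / 2 * w) + lam / w * sinh (u / 2 * w))) u := by
  have hexp := ((hasDerivAt_id u).const_mul lam).div_const 2 |>.exp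
  have hsinh := ((hasDerivAt_id u).div_const 2).mul_const w |>.sinh
  refine ((hexp.const_mul (2 / w)).mul hsinh).congr_deriv ?_
  simp only [id]
  field_simp
  ring

theorem exp_mul_meanDist (lam c u : ℝ) :
    exp (lam * u) * meanDist lam c u
      = exp (lam * u / 2) * (cosh (u / 2 * √(lam ^ 2 + 4 * c ^ 2))
          + lam / √(lam ^ 2 + 4 * c ^ 2) * sinh (u / 2 * √(lam ^ 2 + 4 * c ^ 2))) := by
  rw [meanDist, ← mul_assoc, ← exp_add]
  ring_nf

theorem integral_exp_mul_meanDist (lam c t : ℝ) (h : 0 < lam ^ 2 + 4 * c ^ 2) :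
    ∫ u in (0:ℝ)..t, exp (lam * u) * meanDist lam c u
      = 2 / √(lam ^ 2 + 4 * c ^ 2) * exp (lam * t / 2)
          * sinh (t / 2 * √(lam ^ 2 + 4 * c ^ 2)) := by
  have hw : √(lam ^ 2 + 4 * c ^ 2) ≠ 0 := (sqrt_pos.2 h).ne'
  simp_rw [exp_mul_meanDist]
  rw [intervalIntegral.integral_eq_sub_of_hasDerivAt
    (fun u _ => hasDerivAt_exp_mul_sinh lam _ u hw) (Continuous.intervalIntegrable (by fun_prop) _ _)]
  simp

theorem one_sub_exp_neg (x : ℝ) : 1 - exp (-x) = 2 * exp (-(x / 2)) * sinh (x / 2) := by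
  rw [sinh_eq, mul_comm 2, mul_assoc, mul_div_cancel₀ _ two_ne_zero, mul_sub, ← exp_add,
    ← exp_add, neg_add_cancel, exp_zero, ← neg_add, add_halves]

theorem jump_back_first_event_general (lam c t : ℝ) (hlam : 0 < lam) (ht : 0 < t) :
    lam * Real.exp (-lam * t) / (1 - Real.exp (-lam * t)) *
        ∫ s in (0:ℝ)..t, Real.exp (lam * (t - s)) * meanDist lam c (t - s)
      = lam / Real.sqrt (lam^2 + 4*c^2) *
          (Real.sinh (t / 2 * Real.sqrt (lam^2 + 4*c^2)) / Real.sinh (lam * t / 2)) := by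
  have hsinh : sinh (lam * t / 2) ≠ 0 := (sinh_pos_iff.2 (by positivity)).ne'
  have hw : √(lam ^ 2 + 4 * c ^ 2) ≠ 0 := by positivity
  rw [intervalIntegral.integral_comp_sub_left (fun u => exp (lam * u) * meanDist lam c u),
    sub_self, sub_zero, integral_exp_mul_meanDist lam c t (by positivity), neg_mul,
    one_sub_exp_neg]
  field_simp
  rw [← exp_add]
  ring_nf

/-- the mean hyperbolic distance for the motion jumping back to
the origin at the first Poisson event, conditioned on `N(t) ≥ 1`:
`(λe^{-λt}/(1-e^{-λt})) ∫₀ᵗ e^{λ(t-s)} E(t-s) ds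
  = (λ/√(λ²+4c²)) sinh((t/2)√(λ²+4c²))/sinh(λt/2)`. -/
theorem jump_back_first_event (lam c t : ℝ) (hlam : 0 < lam) (hc : 0 < c) (ht : 0 < t) :
    lam * Real.exp (-lam * t) / (1 - Real.exp (-lam * t)) *
        ∫ s in (0:ℝ)..t, Real.exp (lam * (t - s)) * meanDist lam c (t - s)
      = lam / Real.sqrt (lam^2 + 4*c^2) *
          (Real.sinh (t / 2 * Real.sqrt (lam^2 + 4*c^2)) / Real.sinh (lam * t / 2)) :=
  jump_back_first_event_general lam c t hlam ht
end
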